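/- arXiv:2303.03762 — 9 statements merged into one kernel-verified Lean document; each statement's English description precedes it below -/
import Mathlib

section
/- Let m ≥ 0 be an integer, let G be a connected graph of order n, let u ∈ V(G), and let Y ⊆ V(G) \ {u}. If δ(G) ≥ 2√n + m + |Y|, then there exists a set X ⊆ N_G(u) \ Y with |X| = m such that G − X is connected. -/
/-!
Build `X` one vertex at a time, keeping `G - X` connected. Suppose `|X| < m` and that deleting
any further neighbour `y ∈ N(u) \ (X ∪ Y)` disconnects `G - X`, cutting off a nonempty set `D_y`
from `u`. A vertex of `D_y` has all its neighbours in `D_y ∪ X ∪ {y}`, so `|D_y| > 2√n`. The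
sets `D_y` are pairwise disjoint, because `D_y ∩ D_z` is closed under the edges of `G - X` and
misses `u`. There are more than `2√n` candidates `y`, so `n ≥ (2√n + 1)²`, which is absurd.
-/

open SimpleGraph

noncomputable def degN {V : Type*} (G : SimpleGraph V) (v : V) : ℕ := (G.neighborSet v).ncard

lemma Set.ncard_mul_le_card_of_pairwiseDisjoint {ι α : Type*} [Finite α] {T : Set ι}
    {D : ι → Set α} (hT : T.Finite) (hD : T.PairwiseDisjoint D) {a : ℝ}
    (ha : ∀ i ∈ T, a ≤ (D i).ncard) : T.ncard * a ≤ Nat.card α := by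
  have hsum : ∑ᶠ i ∈ T, (D i).ncard ≤ Nat.card α := by
    rw [← hT.ncard_biUnion (fun i _ => Set.toFinite _) hD]
    exact Set.ncard_le_card _
  rw [finsum_mem_eq_finite_toFinset_sum _ hT] at hsum
  rw [Set.ncard_eq_toFinset_card T hT]
  calc (hT.toFinset.card : ℝ) * a = ∑ _i ∈ hT.toFinset, a := by simp
    _ ≤ ∑ i ∈ hT.toFinset, ((D i).ncard : ℝ) :=
        Finset.sum_le_sum fun i hi => ha i (by simpa using hi)
    _ ≤ Nat.card α := by exact_mod_cast hsum

namespace SimpleGraph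

variable {V : Type*}

lemma Reachable.mem_of_adj_closed {H : SimpleGraph V} {S : Set V}
    (hS : ∀ a b, H.Adj a b → a ∈ S → b ∈ S) {a b : V} (h : H.Reachable a b)
    (ha : a ∈ S) : b ∈ S := by
  rw [reachable_iff_reflTransGen] at h
  induction h with
  | refl => exact ha
  | tail _ hbc ih => exact hS _ _ hbc ih

variable (G : SimpleGraph V)

/-- The graph `G - A`, kept on the vertex type `V` by leaving the vertices of `A` isolated. -/
def isolateVerts (A : Set V) : SimpleGraph V where
  Adj a b := G.Adj a b ∧ a ∉ A ∧ b ∉ A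
  symm := ⟨fun _ _ h => ⟨h.1.symm, h.2.2, h.2.1⟩⟩
  loopless := ⟨fun _ h => G.irrefl h.1⟩

def cutOff (A : Set V) (u : V) : Set V :=
  {v | v ∉ A ∧ ¬ (G.isolateVerts A).Reachable u v}

variable {G}

@[simp]
lemma isolateVerts_adj {A : Set V} {a b : V} :
    (G.isolateVerts A).Adj a b ↔ G.Adj a b ∧ a ∉ A ∧ b ∉ A :=
  Iff.rfl

lemma isolateVerts_empty : G.isolateVerts ∅ = G := by
  ext
  simp

lemma induce_compl_connected_of_forall_reachable {A : Set V} {u : V} (hu : u ∉ A)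
    (h : ∀ v ∉ A, (G.isolateVerts A).Reachable u v) : (G.induce Aᶜ).Connected := by
  have hreach : ∀ v, (G.isolateVerts A).Reachable u v → ∀ hv : v ∉ A,
      (G.induce Aᶜ).Reachable ⟨u, hu⟩ ⟨v, hv⟩ := by
    intro v huv
    rw [reachable_iff_reflTransGen] at huv
    induction huv with
    | refl => exact fun _ => Reachable.refl _
    | tail _ hbc ih =>
      exact fun _ => (ih hbc.2.1).trans (Adj.reachable (by simpa using hbc.1))
  rw [connected_iff_exists_forall_reachable]
  exact ⟨⟨u, hu⟩, fun ⟨v, hv⟩ => hreach v (h v hv) hv⟩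

lemma mem_or_mem_cutOff_of_adj {A : Set V} {u v w : V} (hv : v ∈ G.cutOff A u)
    (hvw : G.Adj v w) : w ∈ A ∨ w ∈ G.cutOff A u := by
  by_cases hw : w ∈ A
  · exact Or.inl hw
  · exact Or.inr ⟨hw, fun huw => hv.2 (huw.trans (Adj.reachable ⟨hvw.symm, hw, hv.1⟩))⟩

lemma notMem_cutOff_of_adj {A : Set V} {u y : V} (hu : u ∉ A) (hy : y ∉ A) (huy : G.Adj u y) :
    y ∉ G.cutOff A u :=
  fun h => h.2 (Adj.reachable ⟨huy, hu, hy⟩)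

lemma degN_add_one_le_ncard_cutOff_add [Finite V] {A : Set V} {u v : V}
    (hv : v ∈ G.cutOff A u) : degN G v + 1 ≤ (G.cutOff A u).ncard + A.ncard := by
  have hN : G.neighborSet v ⊆ (G.cutOff A u \ {v}) ∪ A := by
    intro w hw
    rcases mem_or_mem_cutOff_of_adj hv hw with hwA | hwD
    · exact Or.inr hwA
    · exact Or.inl ⟨hwD, fun hwv => G.irrefl (by rwa [hwv] at hw)⟩
  have := (Set.ncard_le_ncard hN).trans (Set.ncard_union_le _ _)
  have := Set.ncard_sdiff_singleton_add_one hv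
  unfold degN
  omega

lemma disjoint_cutOff_insert {X : Set V} {u y z : V} (hu : u ∉ X)
    (hX : ∀ v ∉ X, (G.isolateVerts X).Reachable u v)
    (hy : y ∈ G.neighborSet u \ X) (hz : z ∈ G.neighborSet u \ X) (hyz : y ≠ z) :
    Disjoint (G.cutOff (insert y X) u) (G.cutOff (insert z X) u) := by
  have hyDz : y ∉ G.cutOff (insert z X) u :=
    notMem_cutOff_of_adj (by simp [hu, G.ne_of_adj hz.1]) (by simp [hyz, hy.2]) hy.1
  have hzDy : z ∉ G.cutOff (insert y X) u :=
    notMem_cutOff_of_adj (by simp [hu, G.ne_of_adj hy.1]) (by simp [hyz.symm, hz.2]) hz.1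
  have hclosed : ∀ c b, (G.isolateVerts X).Adj c b →
      c ∈ G.cutOff (insert y X) u ∩ G.cutOff (insert z X) u →
      b ∈ G.cutOff (insert y X) u ∩ G.cutOff (insert z X) u := by
    rintro c b ⟨hcb, -, hbX⟩ ⟨hcy, hcz⟩
    have hby := mem_or_mem_cutOff_of_adj hcy hcb
    have hbz := mem_or_mem_cutOff_of_adj hcz hcb
    simp only [Set.mem_insert_iff, hbX, or_false] at hby hbz
    rcases hby with rfl | hby
    · rcases hbz with rfl | hbz
      exacts [absurd rfl hyz, absurd hbz hyDz]
    · rcases hbz with rfl | hbz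
      exacts [absurd hby hzDy, ⟨hby, hbz⟩]
  refine Set.disjoint_left.2 fun v hvy hvz => ?_
  have hvX : v ∉ X := fun h => hvy.1 (Set.mem_insert_of_mem _ h)
  exact ((hX v hvX).symm.mem_of_adj_closed hclosed ⟨hvy, hvz⟩).1.2 (Reachable.refl _)

theorem exists_forall_reachable_isolateVerts_insert [Finite V] {X T : Set V} {u : V} {a : ℝ}
    (hu : u ∉ X) (hX : ∀ v ∉ X, (G.isolateVerts X).Reachable u v)
    (hT : T ⊆ G.neighborSet u \ X) (hTa : a ≤ T.ncard) (hdeg : ∀ v, a + X.ncard ≤ degN G v)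
    (hn : √(Nat.card V) < a) :
    ∃ y ∈ T, ∀ v ∉ insert y X, (G.isolateVerts (insert y X)).Reachable u v := by
  by_contra! hcut
  have hbig : ∀ y ∈ T, a ≤ (G.cutOff (insert y X) u).ncard := by
    intro y hy
    obtain ⟨v, hv, hvu⟩ := hcut y hy
    have hdegv : (degN G v : ℝ) + 1 ≤ (G.cutOff (insert y X) u).ncard + (X.ncard + 1) := by
      exact_mod_cast (degN_add_one_le_ncard_cutOff_add ⟨hv, hvu⟩).trans
        (Nat.add_le_add_left (Set.ncard_insert_le y X) _)
    linarith [hdeg v]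
  have hdisj : T.PairwiseDisjoint fun y => G.cutOff (insert y X) u :=
    fun y hy z hz hyz => disjoint_cutOff_insert hu hX (hT hy) (hT hz) hyz
  have hcount := Set.ncard_mul_le_card_of_pairwiseDisjoint T.toFinite hdisj hbig
  have ha : 0 < a := (Real.sqrt_nonneg _).trans_lt hn
  have hsq : (Nat.card V : ℝ) < a ^ 2 := (Real.sqrt_lt' ha).1 hn
  nlinarith

theorem exists_subset_neighborSet_forall_reachable [Fintype V] (hconn : G.Connected) (u : V)
    (Y : Set V) {m : ℕ}
    (hdelta : ∀ v, 2 * √(Fintype.card V) + m + Y.ncard ≤ (degN G v : ℝ)) :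
    ∀ k ≤ m, ∃ X ⊆ G.neighborSet u \ Y, X.ncard = k ∧
      ∀ v ∉ X, (G.isolateVerts X).Reachable u v := by
  intro k
  induction k with
  | zero =>
    intro _
    refine ⟨∅, Set.empty_subset _, Set.ncard_empty _, fun v _ => ?_⟩
    rw [isolateVerts_empty]
    exact hconn.preconnected u v
  | succ k ih =>
    intro hk
    obtain ⟨X, hXS, rfl, hX⟩ := ih (Nat.le_of_succ_le hk)
    have hu : u ∉ X := fun h => G.irrefl (hXS h).1
    have hdegu : (degN G u : ℝ) ≤ ((G.neighborSet u \ Y) \ X).ncard + X.ncard + Y.ncard := by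
      exact_mod_cast (Set.ncard_le_ncard_sdiff_add_ncard _ Y).trans
        (Nat.add_le_add_right (Set.ncard_le_ncard_sdiff_add_ncard _ X) _)
    have hkm : (X.ncard : ℝ) + 1 ≤ m := by exact_mod_cast hk
    have hsqrt := Real.sqrt_nonneg (Fintype.card V)
    have hY0 : (0 : ℝ) ≤ Y.ncard := Nat.cast_nonneg _
    obtain ⟨y, hy, hyX⟩ := exists_forall_reachable_isolateVerts_insert
      (T := (G.neighborSet u \ Y) \ X) (a := 2 * √(Fintype.card V) + 1) hu hX
      (fun y hy => ⟨hy.1.1, hy.2⟩) (by linarith [hdelta u]) (fun v => by linarith [hdelta v])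
      (by rw [Nat.card_eq_fintype_card]; linarith)
    exact ⟨insert y X, Set.insert_subset hy.1 hXS, Set.ncard_insert_of_notMem hy.2, hyX⟩

end SimpleGraph

theorem stmt4_general {V : Type*} [Fintype V] (m : ℕ) (G : SimpleGraph V) (hconn : G.Connected)
    (u : V) (Y : Set V)
    (hdelta : ∀ v : V, 2 * Real.sqrt (Fintype.card V) + m + Y.ncard ≤ (degN G v : ℝ)) :
    ∃ X : Set V, X ⊆ G.neighborSet u \ Y ∧ X.ncard = m ∧ (G.induce Xᶜ).Connected := by
  obtain ⟨X, hXS, hcard, hX⟩ :=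
    exists_subset_neighborSet_forall_reachable hconn u Y hdelta m le_rfl
  exact ⟨X, hXS, hcard,
    induce_compl_connected_of_forall_reachable (fun h => G.irrefl (hXS h).1) hX⟩

/-- Lemma 2.2: if `G` is connected of order `n`, `u ∈ V(G)`, `Y ⊆ V(G) \ {u}` and
`δ(G) ≥ 2√n + m + |Y|`, then there is `X ⊆ N_G(u) \ Y` with `|X| = m` such that
`G - X` is connected. -/
theorem stmt4 {V : Type*} [Fintype V] (m : ℕ) (G : SimpleGraph V) (hconn : G.Connected)
    (u : V) (Y : Set V) (hY : u ∉ Y)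
    (hdelta : ∀ v : V, 2 * Real.sqrt (Fintype.card V) + m + Y.ncard ≤ (degN G v : ℝ)) :
    ∃ X : Set V, X ⊆ G.neighborSet u \ Y ∧ X.ncard = m ∧ (G.induce Xᶜ).Connected :=
  stmt4_general m G hconn u Y hdelta
end

section
/- Let k ≥ 2 and n ≥ 2k+1 be integers. Then every graph G in the family 𝒢_{k,n} is a connected graph of order n and satisfies σ₂(G) = n − 2. -/
/-!
Write `s = |L₁ ∪ L₂|` and `t = |L₃ ∪ L₄|`, so `s + t = n`. The clique `L₁ ∪ L₂` gives every vertex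
there degree at least `s - 1`, and a vertex of `L₂` also has a neighbour in `L₃`, so `s ≤ deg u₂ ≤ k`
and hence `s ≤ t` once `n ≥ 2k`. Vertices of `L₃ ∪ L₄` have degree at least `t - 1 ≥ s - 1`. Two
non-adjacent vertices cannot both lie in the clique `L₁ ∪ L₂`, so their degrees sum to at least
`(t - 1) + (s - 1) = n - 2`; a vertex of `L₁` and one of `L₄` see only their own side and attain it.
-/

open SimpleGraph

/-- `G` together with the partition `L1, L2, L3, L4` satisfies the defining
conditions (L1)–(L5) of the family `𝒢_{k,n}`. -/
def GFamilyWith {V : Type*} (k : ℕ) (G : SimpleGraph V) (L1 L2 L3 L4 : Set V) : Prop :=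
  L1.Nonempty ∧ L2.Nonempty ∧ L3.Nonempty ∧ L4.Nonempty ∧
  L1 ∪ L2 ∪ L3 ∪ L4 = Set.univ ∧
  Disjoint L1 L2 ∧ Disjoint L1 L3 ∧ Disjoint L1 L4 ∧
  Disjoint L2 L3 ∧ Disjoint L2 L4 ∧ Disjoint L3 L4 ∧
  G.IsClique (L1 ∪ L2) ∧ G.IsClique L4 ∧
  (∀ u ∈ L1, ∀ v ∈ L3 ∪ L4, ¬ G.Adj u v) ∧
  (∀ u ∈ L2, (∃ v ∈ L3, G.Adj u v) ∧ (∀ v ∈ L4, ¬ G.Adj u v) ∧ degN G u ≤ k) ∧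
  (∀ u ∈ L3, (∃ v ∈ L2, G.Adj u v) ∧ (∀ v ∈ L4, G.Adj u v) ∧
    Nat.card V - (L1 ∪ L2).ncard - 1 ≤ degN G u)

/-- `G` belongs to the family `𝒢_{k,n}` (membership up to isomorphism). -/
def GFamily {V : Type*} (k : ℕ) (G : SimpleGraph V) : Prop :=
  ∃ L1 L2 L3 L4 : Set V, GFamilyWith k G L1 L2 L3 L4

theorem degN_lt_ncard {V : Type*} [Finite V] {G : SimpleGraph V} {S : Set V} {u : V}
    (hu : u ∈ S) (h : G.neighborSet u ⊆ S) : degN G u < S.ncard :=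
  Set.ncard_lt_ncard ((Set.ssubset_iff_of_subset h).2 ⟨u, hu, G.notMem_neighborSet_self⟩)

theorem ncard_sub_one_le_degN {V : Type*} [Finite V] {G : SimpleGraph V} {S : Set V} {u : V}
    (hu : u ∈ S) (h : S \ {u} ⊆ G.neighborSet u) : S.ncard - 1 ≤ degN G u := by
  rw [← Set.ncard_sdiff_singleton_of_mem hu]
  exact Set.ncard_le_ncard h

namespace SimpleGraph.IsClique

variable {V : Type*} {G : SimpleGraph V} {S : Set V} {u v : V}

theorem sdiff_singleton_subset_neighborSet (hS : G.IsClique S) (hu : u ∈ S) :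
    S \ {u} ⊆ G.neighborSet u :=
  fun _ hw => hS hu hw.1 (Ne.symm hw.2)

variable [Finite V]

theorem ncard_sub_one_le_degN (hS : G.IsClique S) (hu : u ∈ S) : S.ncard - 1 ≤ degN G u :=
  _root_.ncard_sub_one_le_degN hu (hS.sdiff_singleton_subset_neighborSet hu)

theorem ncard_le_degN_of_adj (hS : G.IsClique S) (hu : u ∈ S) (hv : v ∉ S) (huv : G.Adj u v) :
    S.ncard ≤ degN G u :=
  calc S.ncard = (Insert.insert v (S \ {u})).ncard := by
        rw [Set.ncard_insert_of_notMem fun h => hv h.1, Set.ncard_sdiff_singleton_add_one hu]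
    _ ≤ degN G u :=
        Set.ncard_le_ncard (Set.insert_subset huv (hS.sdiff_singleton_subset_neighborSet hu))

end SimpleGraph.IsClique

namespace GFamilyWith

variable {V : Type*} {k : ℕ} {G : SimpleGraph V} {L1 L2 L3 L4 : Set V}
  (h : GFamilyWith k G L1 L2 L3 L4)
include h

theorem mem_union_or_mem_union (x : V) : x ∈ L1 ∪ L2 ∨ x ∈ L3 ∪ L4 := by
  have hx : x ∈ L1 ∪ L2 ∪ L3 ∪ L4 := h.2.2.2.2.1 ▸ Set.mem_univ x
  simpa only [Set.mem_union, or_assoc] using hx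

theorem disjoint_union : Disjoint (L1 ∪ L2) (L3 ∪ L4) :=
  have ⟨_, _, _, _, _, _, d13, d14, d23, d24, _⟩ := h
  Set.disjoint_union_left.2 ⟨Set.disjoint_union_right.2 ⟨d13, d14⟩,
    Set.disjoint_union_right.2 ⟨d23, d24⟩⟩

theorem isClique_union : G.IsClique (L1 ∪ L2) := h.2.2.2.2.2.2.2.2.2.2.2.1

theorem isClique_L4 : G.IsClique L4 := h.2.2.2.2.2.2.2.2.2.2.2.2.1

theorem not_adj_of_mem_L1 {u v : V} (hu : u ∈ L1) (hv : v ∈ L3 ∪ L4) : ¬ G.Adj u v :=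
  h.2.2.2.2.2.2.2.2.2.2.2.2.2.1 u hu v hv

theorem of_mem_L2 {u : V} (hu : u ∈ L2) :
    (∃ v ∈ L3, G.Adj u v) ∧ (∀ v ∈ L4, ¬ G.Adj u v) ∧ degN G u ≤ k :=
  h.2.2.2.2.2.2.2.2.2.2.2.2.2.2.1 u hu

theorem of_mem_L3 {u : V} (hu : u ∈ L3) :
    (∃ v ∈ L2, G.Adj u v) ∧ (∀ v ∈ L4, G.Adj u v) ∧
      Nat.card V - (L1 ∪ L2).ncard - 1 ≤ degN G u :=
  h.2.2.2.2.2.2.2.2.2.2.2.2.2.2.2 u hu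

theorem connected : G.Connected := by
  have ⟨_, ⟨u2, hu2⟩, _, ⟨u4, hu4⟩, _, d12, _⟩ := h
  have reach_L3 : ∀ x ∈ L3, G.Reachable u4 x := fun x hx =>
    ((h.of_mem_L3 hx).2.1 u4 hu4).reachable.symm
  have reach_L2 : ∀ x ∈ L2, G.Reachable u4 x := fun x hx =>
    have ⟨v, hv, hxv⟩ := (h.of_mem_L2 hx).1
    (reach_L3 v hv).trans hxv.reachable.symm
  refine (connected_iff_exists_forall_reachable G).2 ⟨u4, fun x => ?_⟩
  rcases h.mem_union_or_mem_union x with (hx | hx) | hx | hx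
  · have hne : u2 ≠ x := (d12.ne_of_mem hx hu2).symm
    exact (reach_L2 u2 hu2).trans (h.isClique_union (Or.inr hu2) (Or.inl hx) hne).reachable
  · exact reach_L2 x hx
  · exact reach_L3 x hx
  · rcases eq_or_ne u4 x with rfl | hne
    · rfl
    · exact (h.isClique_L4 hu4 hx hne).reachable

theorem neighborSet_subset_of_mem_L1 {u : V} (hu : u ∈ L1) : G.neighborSet u ⊆ L1 ∪ L2 :=
  fun v huv => (h.mem_union_or_mem_union v).resolve_right (h.not_adj_of_mem_L1 hu · huv)

theorem neighborSet_subset_of_mem_L4 {u : V} (hu : u ∈ L4) : G.neighborSet u ⊆ L3 ∪ L4 := by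
  intro v huv
  refine (h.mem_union_or_mem_union v).resolve_left ?_
  rintro (hv | hv)
  · exact h.not_adj_of_mem_L1 hv (Or.inr hu) huv.symm
  · exact (h.of_mem_L2 hv).2.1 u hu huv.symm

variable [Finite V]

theorem ncard_add_ncard : (L1 ∪ L2).ncard + (L3 ∪ L4).ncard = Nat.card V := by
  rw [← Set.ncard_union_eq h.disjoint_union, ← Set.ncard_univ]
  congr 1
  exact Set.eq_univ_of_forall fun x => (h.mem_union_or_mem_union x).elim Or.inl Or.inr

theorem ncard_sub_one_le_degN_of_mem_union_right {u : V} (hu : u ∈ L3 ∪ L4) :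
    (L3 ∪ L4).ncard - 1 ≤ degN G u := by
  rcases hu with hu | hu
  · have := (h.of_mem_L3 hu).2.2
    have := h.ncard_add_ncard
    omega
  · refine ncard_sub_one_le_degN (Or.inr hu) fun v ⟨hv, hvu⟩ => ?_
    rcases hv with hv | hv
    · exact ((h.of_mem_L3 hv).2.1 u hu).symm
    · exact h.isClique_L4 hu hv (Ne.symm hvu)

theorem ncard_union_le : (L1 ∪ L2).ncard ≤ k := by
  have ⟨_, ⟨u, hu⟩, _⟩ := h
  obtain ⟨⟨v, hv, huv⟩, -, hdeg⟩ := h.of_mem_L2 hu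
  have hv' : v ∉ L1 ∪ L2 := h.disjoint_union.notMem_of_mem_right (Or.inl hv)
  exact (h.isClique_union.ncard_le_degN_of_adj (Or.inr hu) hv' huv).trans hdeg

theorem ncard_union_le_ncard_union (hn : 2 * k ≤ Nat.card V) :
    (L1 ∪ L2).ncard ≤ (L3 ∪ L4).ncard := by
  have := h.ncard_union_le
  have := h.ncard_add_ncard
  omega

theorem ncard_sub_one_le_degN (hn : 2 * k ≤ Nat.card V) (u : V) :
    (L1 ∪ L2).ncard - 1 ≤ degN G u := by
  rcases h.mem_union_or_mem_union u with hu | hu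
  · exact h.isClique_union.ncard_sub_one_le_degN hu
  · have := h.ncard_union_le_ncard_union hn
    have := h.ncard_sub_one_le_degN_of_mem_union_right hu
    omega

theorem card_sub_two_le_degN_add_degN (hn : 2 * k ≤ Nat.card V) {u v : V} (huv : u ≠ v)
    (hadj : ¬ G.Adj u v) : Nat.card V - 2 ≤ degN G u + degN G v := by
  have hsum := h.ncard_add_ncard
  have hu := h.ncard_sub_one_le_degN hn u
  have hv := h.ncard_sub_one_le_degN hn v
  rcases h.mem_union_or_mem_union u with hu' | hu'
  · rcases h.mem_union_or_mem_union v with hv' | hv'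
    · exact absurd (h.isClique_union hu' hv' huv) hadj
    · have := h.ncard_sub_one_le_degN_of_mem_union_right hv'
      omega
  · have := h.ncard_sub_one_le_degN_of_mem_union_right hu'
    omega

theorem exists_not_adj_degN_add_degN_le :
    ∃ u v : V, u ≠ v ∧ ¬ G.Adj u v ∧ degN G u + degN G v ≤ Nat.card V - 2 := by
  have ⟨⟨u, hu⟩, _, _, ⟨v, hv⟩, _⟩ := h
  have hu' := degN_lt_ncard (Set.mem_union_left L2 hu) (h.neighborSet_subset_of_mem_L1 hu)
  have hv' := degN_lt_ncard (Set.mem_union_right L3 hv) (h.neighborSet_subset_of_mem_L4 hv)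
  have := h.ncard_add_ncard
  exact ⟨u, v, h.disjoint_union.ne_of_mem (Or.inl hu) (Or.inr hv),
    h.not_adj_of_mem_L1 hu (Or.inr hv), by omega⟩

end GFamilyWith

theorem stmt7_general {V : Type*} [Fintype V] (k n : ℕ) (hn : 2 * k + 1 ≤ n)
    (hcard : Fintype.card V = n) (G : SimpleGraph V) (hG : GFamily k G) :
    G.Connected ∧
    (∀ u v : V, u ≠ v → ¬ G.Adj u v → n - 2 ≤ degN G u + degN G v) ∧
    (∃ u v : V, u ≠ v ∧ ¬ G.Adj u v ∧ degN G u + degN G v = n - 2) := by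
  obtain ⟨L1, L2, L3, L4, h⟩ := hG
  rw [← hcard, ← Nat.card_eq_fintype_card] at hn ⊢
  have hn' : 2 * k ≤ Nat.card V := by omega
  obtain ⟨u, v, huv, hadj, hle⟩ := h.exists_not_adj_degN_add_degN_le
  exact ⟨h.connected, fun _ _ => h.card_sub_two_le_degN_add_degN hn',
    u, v, huv, hadj, hle.antisymm (h.card_sub_two_le_degN_add_degN hn' huv hadj)⟩

/-- Proposition 3.1: every `G ∈ 𝒢_{k,n}` (with `k ≥ 2`, `n ≥ 2k+1`) is a connected
graph of order `n` with `σ₂(G) = n - 2`. -/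
theorem stmt7 {V : Type*} [Fintype V] (k n : ℕ) (hk : 2 ≤ k) (hn : 2 * k + 1 ≤ n)
    (hcard : Fintype.card V = n) (G : SimpleGraph V) (hG : GFamily k G) :
    G.Connected ∧
    (∀ u v : V, u ≠ v → ¬ G.Adj u v → n - 2 ≤ degN G u + degN G v) ∧
    (∃ u v : V, u ≠ v ∧ ¬ G.Adj u v ∧ degN G u + degN G v = n - 2) :=
  stmt7_general k n hn hcard G hG
end

section
/- Let k ≥ 2 be an integer and let n ≥ 2k+1 be an odd integer. Then the graph G'_{k,n} has no [2,k]-ST. -/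
open SimpleGraph

/-- `G` has a `[2,k]`-ST: a spanning tree with no vertex of degree `i` for `2 ≤ i ≤ k`. -/
def HasST2k {V : Type*} (k : ℕ) (G : SimpleGraph V) : Prop :=
  ∃ T : SimpleGraph V, T ≤ G ∧ T.IsTree ∧ ∀ v : V, ¬ (2 ≤ degN T v ∧ degN T v ≤ k)

/-- Vertex set of the graph `G'_{k,n}`: `A₀` (of size 3, with `u = Sum.inl 0`,
`v₁ = Sum.inl 1`, `v₂ = Sum.inl 2`), `A₁` and `A₂` (each of size `(n-3)/2`). -/
abbrev GknV (n : ℕ) := Fin 3 ⊕ Fin ((n - 3) / 2) ⊕ Fin ((n - 3) / 2)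

/-- The graph `G'_{k,n}`: disjoint complete graphs `A₀, A₁, A₂`, together with all
edges from `u` to `W₁` (the first `k-1` vertices of `A₁`) and all edges from
`v₁` and `v₂` to `W₂` (the first `k-1` vertices of `A₂`). -/
def Gkn (k n : ℕ) : SimpleGraph (GknV n) :=
  SimpleGraph.fromRel (fun a b =>
    (∃ x y, a = Sum.inl x ∧ b = Sum.inl y) ∨
    (∃ x y, a = Sum.inr (Sum.inl x) ∧ b = Sum.inr (Sum.inl y)) ∨
    (∃ x y, a = Sum.inr (Sum.inr x) ∧ b = Sum.inr (Sum.inr y)) ∨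
    (∃ j : Fin ((n - 3) / 2), (j : ℕ) < k - 1 ∧ a = Sum.inl 0 ∧ b = Sum.inr (Sum.inl j)) ∨
    (∃ j : Fin ((n - 3) / 2), (j : ℕ) < k - 1 ∧ (a = Sum.inl 1 ∨ a = Sum.inl 2) ∧
      b = Sum.inr (Sum.inr j)))

/-!
In a `[2,k]`-ST `T`, a vertex with two tree-neighbours has degree at least `k + 1`; if its degree in
the host graph is at most `k + 1`, it keeps all its edges. In `G'_{k,n}` the vertex `u` is the only
link between `A₁` and the rest, so it has a tree-neighbour in `A₁` and one outside, hence keeps its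
edges to `v₁` and `v₂`. Likewise `A₂` hangs only on `v₁, v₂`, so some `vᵢ` has a tree-neighbour in
`A₂` besides `u`, and keeps its edge to the other `v`: the tree contains the triangle `u v₁ v₂`.
-/

theorem Fin.ncard_setOf_val_lt_le (m c : ℕ) : {j : Fin m | (j : ℕ) < c}.ncard ≤ c := by
  rw [Set.ncard_eq_toFinset_card', Set.toFinset_ofPred, Fin.card_filter_val_lt]
  exact min_le_right _ _

namespace SimpleGraph

variable {V : Type*} {G T : SimpleGraph V}

theorem Preconnected.exists_adj_mem_not_mem (hG : G.Preconnected) {S : Set V} {a b : V}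
    (ha : a ∈ S) (hb : b ∉ S) : ∃ x ∈ S, ∃ y ∉ S, G.Adj x y := by
  obtain ⟨p⟩ := hG a b
  obtain ⟨d, -, hx, hy⟩ := p.exists_boundary_dart S ha hb
  exact ⟨d.fst, hx, d.snd, hy, d.adj⟩

theorem IsAcyclic.not_adj_of_adj_of_adj (hT : T.IsAcyclic) {a b c : V} (hab : T.Adj a b)
    (hac : T.Adj a c) : ¬ T.Adj b c := by
  classical
  exact fun hbc => hT.cliqueFree le_rfl {a, b, c} (is3Clique_triple_iff.2 ⟨hab, hac, hbc⟩)

theorem adj_of_two_le_of_ncard_neighborSet_le {k : ℕ} (hTG : T ≤ G)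
    (hgap : ∀ v, ¬ (2 ≤ degN T v ∧ degN T v ≤ k)) {v a b w : V}
    (hfin : (G.neighborSet v).Finite) (hG : (G.neighborSet v).ncard ≤ k + 1)
    (ha : T.Adj v a) (hb : T.Adj v b) (hab : a ≠ b) (hw : G.Adj v w) : T.Adj v w := by
  have hsub : T.neighborSet v ⊆ G.neighborSet v := fun _ h => hTG h
  have htwo : 2 ≤ degN T v := by
    rw [← Set.ncard_pair hab]
    exact Set.ncard_le_ncard (Set.pair_subset ha hb) (hfin.subset hsub)
  have hdeg : (G.neighborSet v).ncard ≤ (T.neighborSet v).ncard := by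
    have := hgap v
    unfold degN at *
    omega
  rw [← mem_neighborSet, Set.eq_of_subset_of_ncard_le hsub hdeg hfin]
  exact hw

end SimpleGraph

namespace Gkn

variable {k n : ℕ}

def A₁ (n : ℕ) : Set (GknV n) := Set.range (Sum.inr ∘ Sum.inl)

def A₂ (n : ℕ) : Set (GknV n) := Set.range (Sum.inr ∘ Sum.inr)

@[simp] lemma adj_inl_inl {x y : Fin 3} : (Gkn k n).Adj (.inl x) (.inl y) ↔ x ≠ y := by
  simp [Gkn]

@[simp] lemma adj_inl_inr_inl {x : Fin 3} {j : Fin ((n - 3) / 2)} :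
    (Gkn k n).Adj (.inl x) (.inr (.inl j)) ↔ x = 0 ∧ (j : ℕ) < k - 1 := by
  simp [Gkn, and_comm]

@[simp] lemma adj_inl_inr_inr {x : Fin 3} {j : Fin ((n - 3) / 2)} :
    (Gkn k n).Adj (.inl x) (.inr (.inr j)) ↔ x ≠ 0 ∧ (j : ℕ) < k - 1 := by
  fin_cases x <;> simp [Gkn]

@[simp] lemma not_adj_inr_inl_inr_inr {i j : Fin ((n - 3) / 2)} :
    ¬ (Gkn k n).Adj (.inr (.inl i)) (.inr (.inr j)) := by
  simp [Gkn]

lemma ncard_neighborSet_inl_le (x : Fin 3) :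
    ((Gkn k n).neighborSet (.inl x)).ncard ≤ 2 + (k - 1) := by
  obtain ⟨f, hf⟩ : ∃ f : Fin ((n - 3) / 2) → GknV n,
      (Gkn k n).neighborSet (.inl x) ⊆ Sum.inl '' {x}ᶜ ∪ f '' {j | (j : ℕ) < k - 1} := by
    by_cases hx : x = 0
    · refine ⟨Sum.inr ∘ Sum.inl, ?_⟩
      rintro (y | j | j) hy <;> simp_all [eq_comm]
    · refine ⟨Sum.inr ∘ Sum.inr, ?_⟩
      rintro (y | j | j) hy <;> simp_all [eq_comm]
  calc _ ≤ _ := Set.ncard_le_ncard hf (Set.toFinite _)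
    _ ≤ _ := Set.ncard_union_le _ _
    _ ≤ 2 + (k - 1) := by
      gcongr
      · rw [Set.ncard_image_of_injective _ Sum.inl_injective, Set.ncard_compl]
        simp
      · exact (Set.ncard_image_le (Set.toFinite _)).trans (Fin.ncard_setOf_val_lt_le _ _)

lemma eq_inl_zero_of_adj_of_mem_A₁ {x y : GknV n} (hx : x ∈ A₁ n) (hy : y ∉ A₁ n)
    (h : (Gkn k n).Adj x y) : y = .inl 0 := by
  obtain ⟨i, rfl⟩ := hx
  rcases y with y | j | j
  · simp_all [adj_comm]
  · simp [A₁] at hy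
  · simp_all

lemma exists_ne_zero_of_adj_of_mem_A₂ {x y : GknV n} (hx : x ∈ A₂ n) (hy : y ∉ A₂ n)
    (h : (Gkn k n).Adj x y) : ∃ i ≠ 0, y = .inl i := by
  obtain ⟨i, rfl⟩ := hx
  rcases y with y | j | j
  · simp_all [adj_comm]
  · simp_all [adj_comm]
  · simp [A₂] at hy

lemma eq_inl_zero_of_adj_of_mem_insert_A₁ {x y : GknV n} (hx : x ∈ insert (.inl 0) (A₁ n))
    (hy : y ∉ insert (.inl 0) (A₁ n)) (h : (Gkn k n).Adj x y) : x = .inl 0 := by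
  rcases hx with rfl | hx
  · rfl
  · exact absurd (.inl (eq_inl_zero_of_adj_of_mem_A₁ hx (fun h => hy (.inr h)) h)) hy

end Gkn

open Gkn in
theorem stmt8_general (k n : ℕ) (hk : 2 ≤ k) (hn : 2 * k + 1 ≤ n) :
    ¬ HasST2k k (Gkn k n) := by
  rintro ⟨T, hTG, hT, hgap⟩
  have hm : 0 < (n - 3) / 2 := by omega
  have hconn := hT.connected.preconnected
  have hsat (x : Fin 3) {a b w : GknV n} (ha : T.Adj (.inl x) a) (hb : T.Adj (.inl x) b)
      (hab : a ≠ b) (hw : (Gkn k n).Adj (.inl x) w) : T.Adj (.inl x) w :=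
    adj_of_two_le_of_ncard_neighborSet_le hTG hgap (Set.toFinite _)
      ((ncard_neighborSet_inl_le x).trans (by omega)) ha hb hab hw
  obtain ⟨a, ha, b, hb, hab⟩ := hconn.exists_adj_mem_not_mem
    (S := A₁ n) (a := .inr (.inl ⟨0, hm⟩)) (b := .inl 0) (by simp [A₁]) (by simp [A₁])
  obtain rfl := eq_inl_zero_of_adj_of_mem_A₁ ha hb (hTG hab)
  obtain ⟨c, hc, d, hd, hcd⟩ := hconn.exists_adj_mem_not_mem (S := insert (.inl 0) (A₁ n))
    (Set.mem_insert _ _) (b := .inl 1) (by simp [A₁])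
  obtain rfl := eq_inl_zero_of_adj_of_mem_insert_A₁ hc hd (hTG hcd)
  have hu (i : Fin 3) (hi : i ≠ 0) : T.Adj (.inl 0) (.inl i) :=
    hsat 0 hab.symm hcd (by rintro rfl; exact hd (.inr ha)) (by simpa using hi.symm)
  obtain ⟨e, he, f, hf, hef⟩ := hconn.exists_adj_mem_not_mem
    (S := A₂ n) (a := .inr (.inr ⟨0, hm⟩)) (b := .inl 0) (by simp [A₂]) (by simp [A₂])
  obtain ⟨i, hi, rfl⟩ := exists_ne_zero_of_adj_of_mem_A₂ he hf (hTG hef)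
  obtain ⟨i', hi', hii'⟩ : ∃ i' : Fin 3, i' ≠ 0 ∧ i ≠ i' := by
    fin_cases i
    · exact absurd rfl hi
    · exact ⟨2, by decide, by decide⟩
    · exact ⟨1, by decide, by decide⟩
  exact hT.isAcyclic.not_adj_of_adj_of_adj (hu i hi) (hu i' hi')
    (hsat i (hu i hi).symm hef.symm (by rintro rfl; simp [A₂] at he) (by simpa using hii'))

/-- Proposition 3.2: the graph `G'_{k,n}` has no `[2,k]`-ST. -/
theorem stmt8 (k n : ℕ) (hk : 2 ≤ k) (hn : 2 * k + 1 ≤ n) (hodd : Odd n) :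
    ¬ HasST2k k (Gkn k n) :=
  stmt8_general k n hk hn
end

section
/- Let k ≥ 2 be an integer and let n ≥ n₁(k) be an odd integer. Then the graph G'_{k,n} is a connected graph of order n, satisfies σ₂(G'_{k,n}) = (n + 2k − 3)/2, and has no k-blocking set. -/
open SimpleGraph

noncomputable def ck (k : ℕ) : ℝ :=
  Real.sqrt ((k : ℝ) * ((k : ℝ) - 1) * ((k : ℝ) + 2 * Real.sqrt (2 * (k : ℝ)) + 2))

/-- `n1 k` is the smallest positive integer `N` such that
`(m + 2k - 2)/4 - 2 * c_k * sqrt m - k^2 - 2k - 1 ≥ 0` for every integer `m ≥ N`. -/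
noncomputable def n1 (k : ℕ) : ℕ :=
  sInf {N : ℕ | 0 < N ∧ ∀ m : ℕ, N ≤ m →
    0 ≤ ((m : ℝ) + 2 * k - 2) / 4 - 2 * ck k * Real.sqrt m - (k : ℝ) ^ 2 - 2 * k - 1}

/-- `U` is a `k`-blocking set of `G`: a cutset all of whose vertices have
degree between `2` and `k` in `G`. -/
def KBlocking {V : Type*} (k : ℕ) (G : SimpleGraph V) (U : Set V) : Prop :=
  ¬ (G.induce Uᶜ).Preconnected ∧ ∀ u ∈ U, 2 ≤ degN G u ∧ degN G u ≤ k

/-!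
Every vertex of `G'_{k,n}` has degree at least `k + 1`: the three vertices of `A₀` have exactly
`k + 1` neighbours, and those of `A₁`, `A₂` at least `(n - 3) / 2 - 1`, which exceeds `k` once
`n ≥ n₁(k)`. So a `k`-blocking set is empty, and the empty set does not cut the connected graph.
Two non-adjacent vertices cannot both lie in the triangle `A₀`, which gives
`σ₂ ≥ (k + 1) + ((n - 3) / 2 - 1)`, with equality for `u` and a vertex of `A₂ \ W₂`.
-/

lemma Fin.ncard_setOf_val_lt {M c : ℕ} (h : c ≤ M) : {j : Fin M | (j : ℕ) < c}.ncard = c := by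
  have : {j : Fin M | (j : ℕ) < c} = Set.range (Fin.castLE h) := by
    ext j; simp
  rw [this, Set.ncard_range_of_injective (Fin.castLE_injective h), Nat.card_eq_fintype_card,
    Fintype.card_fin]

namespace SimpleGraph

variable {V : Type*} {G : SimpleGraph V} {s : Set V}

lemma IsClique.reachable (hs : G.IsClique s) {v w : V} (hv : v ∈ s) (hw : w ∈ s) :
    G.Reachable v w := by
  obtain rfl | hvw := eq_or_ne v w
  · rfl
  · exact (hs hv hw hvw).reachable

lemma IsClique.ncard_sub_one_le_degN_s9 [Finite V] (hs : G.IsClique s) {v : V} (hv : v ∈ s) :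
    s.ncard - 1 ≤ degN G v := by
  rw [← Set.ncard_sdiff_singleton_of_mem hv]
  exact Set.ncard_le_ncard (fun w hw => hs hv hw.1 (Ne.symm hw.2)) (Set.toFinite _)

lemma Connected.not_kBlocking {k : ℕ} (hG : G.Connected) (hdeg : ∀ v, k < degN G v) (U : Set V) :
    ¬ KBlocking k G U := by
  rintro ⟨hcut, hdegU⟩
  have hU : U = ∅ := Set.eq_empty_of_forall_notMem fun u hu => (hdegU u hu).2.not_gt (hdeg u)
  rw [hU, Set.compl_empty] at hcut
  exact hcut ((induceUnivIso G).preconnected_iff.mpr hG.preconnected)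

end SimpleGraph

namespace Gkn

variable {k n : ℕ}

lemma isClique_range_inl : (Gkn k n).IsClique (Set.range Sum.inl) := by
  rintro _ ⟨i, rfl⟩ _ ⟨j, rfl⟩ hij
  simpa [Gkn, fromRel_adj] using hij

lemma isClique_range_inr_inl : (Gkn k n).IsClique (Set.range (Sum.inr ∘ Sum.inl)) := by
  rintro _ ⟨i, rfl⟩ _ ⟨j, rfl⟩ hij
  simpa [Gkn, fromRel_adj] using hij

lemma isClique_range_inr_inr : (Gkn k n).IsClique (Set.range (Sum.inr ∘ Sum.inr)) := by
  rintro _ ⟨i, rfl⟩ _ ⟨j, rfl⟩ hij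
  simpa [Gkn, fromRel_adj] using hij

/-- The block that `Sum.inl i` is joined to: `A₁` for `u = Sum.inl 0`, `A₂` for `v₁` and `v₂`. -/
def attach (n : ℕ) (i : Fin 3) : Fin ((n - 3) / 2) → GknV n :=
  if i = 0 then Sum.inr ∘ Sum.inl else Sum.inr ∘ Sum.inr

lemma neighborSet_inl (i : Fin 3) :
    (Gkn k n).neighborSet (Sum.inl i) =
      Sum.inl '' {i}ᶜ ∪ attach n i '' {j | (j : ℕ) < k - 1} := by
  ext x
  rcases x with i' | j | j <;> fin_cases i <;>
    simp [Gkn, fromRel_adj, attach, eq_comm]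

lemma attach_injective (i : Fin 3) : (attach n i).Injective := by
  unfold attach
  split_ifs
  · exact Sum.inr_injective.comp Sum.inl_injective
  · exact Sum.inr_injective.comp Sum.inr_injective

lemma degN_inl (hk : 1 ≤ k) (hkn : k - 1 ≤ (n - 3) / 2) (i : Fin 3) :
    degN (Gkn k n) (Sum.inl i) = k + 1 := by
  have hdisj : Disjoint (Sum.inl '' {i}ᶜ : Set (GknV n)) (attach n i '' {j | (j : ℕ) < k - 1}) := by
    rw [Set.disjoint_left]
    rintro _ ⟨i', -, rfl⟩ ⟨j, -, hj⟩
    unfold attach at hj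
    split_ifs at hj <;> simp at hj
  rw [degN, neighborSet_inl, Set.ncard_union_eq hdisj,
    Set.ncard_image_of_injective _ Sum.inl_injective,
    Set.ncard_image_of_injective _ (attach_injective i), Fin.ncard_setOf_val_lt hkn,
    Set.ncard_compl, Set.ncard_singleton, Nat.card_eq_fintype_card, Fintype.card_fin]
  omega

lemma sub_one_le_degN_inr (x : Fin ((n - 3) / 2) ⊕ Fin ((n - 3) / 2)) :
    (n - 3) / 2 - 1 ≤ degN (Gkn k n) (Sum.inr x) := by
  rcases x with j | j
  · simpa [Set.ncard_range_of_injective (Sum.inr_injective.comp Sum.inl_injective)] using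
      isClique_range_inr_inl.ncard_sub_one_le_degN_s9 (Set.mem_range_self (f := Sum.inr ∘ Sum.inl) j)
  · simpa [Set.ncard_range_of_injective (Sum.inr_injective.comp Sum.inr_injective)] using
      isClique_range_inr_inr.ncard_sub_one_le_degN_s9 (Set.mem_range_self (f := Sum.inr ∘ Sum.inr) j)

/-- A vertex of `A₂ \ W₂` has no neighbours outside `A₂`. -/
lemma degN_inr_inr_of_le {j : Fin ((n - 3) / 2)} (hj : k - 1 ≤ j) :
    degN (Gkn k n) (Sum.inr (Sum.inr j)) = (n - 3) / 2 - 1 := by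
  refine le_antisymm ?_ (sub_one_le_degN_inr _)
  have hsub : (Gkn k n).neighborSet (Sum.inr (Sum.inr j)) ⊆
      Set.range (Sum.inr ∘ Sum.inr) \ {Sum.inr (Sum.inr j)} := by
    rintro (i | i | i) h <;> simp [Gkn, fromRel_adj] at h ⊢
    · omega
    · exact Ne.symm h
  calc degN (Gkn k n) (Sum.inr (Sum.inr j)) ≤ _ := Set.ncard_le_ncard hsub (Set.toFinite _)
    _ = (n - 3) / 2 - 1 := by
      refine (Set.ncard_sdiff_singleton_of_mem (Set.mem_range_self j)).trans ?_
      simp [Set.ncard_range_of_injective (Sum.inr_injective.comp Sum.inr_injective)]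

lemma connected (hk : 2 ≤ k) (hn : 0 < (n - 3) / 2) : (Gkn k n).Connected := by
  let j₀ : Fin ((n - 3) / 2) := ⟨0, hn⟩
  have hu : (Gkn k n).Adj (Sum.inl 0) (Sum.inr (Sum.inl j₀)) := by
    simp [Gkn, fromRel_adj, j₀]; omega
  have hv₁ : (Gkn k n).Adj (Sum.inl 1) (Sum.inr (Sum.inr j₀)) := by
    simp [Gkn, fromRel_adj, j₀]; omega
  refine (connected_iff_exists_forall_reachable _).mpr ⟨Sum.inl 0, ?_⟩
  rintro (i | j | j)
  · exact isClique_range_inl.reachable ⟨0, rfl⟩ ⟨i, rfl⟩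
  · exact hu.reachable.trans (isClique_range_inr_inl.reachable ⟨j₀, rfl⟩ ⟨j, rfl⟩)
  · exact (isClique_range_inl.reachable ⟨0, rfl⟩ ⟨1, rfl⟩).trans
      (hv₁.reachable.trans (isClique_range_inr_inr.reachable ⟨j₀, rfl⟩ ⟨j, rfl⟩))

lemma card_vertices (h3 : 3 ≤ n) (hodd : Odd n) : Fintype.card (GknV n) = n := by
  obtain ⟨t, rfl⟩ := hodd
  simp only [GknV, Fintype.card_sum, Fintype.card_fin]
  omega

lemma lt_degN (hk : 1 ≤ k) (hkn : k + 2 ≤ (n - 3) / 2) (v : GknV n) : k < degN (Gkn k n) v := by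
  rcases v with i | x
  · rw [degN_inl hk (by omega)]; omega
  · have := sub_one_le_degN_inr (k := k) x; omega

lemma le_degN_add_degN_of_not_adj (hk : 1 ≤ k) (hkn : k + 2 ≤ (n - 3) / 2) {v w : GknV n}
    (hvw : v ≠ w) (hadj : ¬ (Gkn k n).Adj v w) :
    (n - 3) / 2 + k ≤ degN (Gkn k n) v + degN (Gkn k n) w := by
  rcases v with i | x <;> rcases w with i' | y
  · exact absurd (isClique_range_inl ⟨i, rfl⟩ ⟨i', rfl⟩ hvw) hadj
  · have := sub_one_le_degN_inr (k := k) y; have := lt_degN hk hkn (Sum.inl i); omega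
  · have := sub_one_le_degN_inr (k := k) x; have := lt_degN hk hkn (Sum.inl i'); omega
  · have := sub_one_le_degN_inr (k := k) x; have := lt_degN hk hkn (Sum.inr y); omega

lemma exists_not_adj_degN_add_degN_eq (hk : 1 ≤ k) (hkn : k + 2 ≤ (n - 3) / 2) :
    ∃ v w : GknV n, v ≠ w ∧ ¬ (Gkn k n).Adj v w ∧
      degN (Gkn k n) v + degN (Gkn k n) w = (n - 3) / 2 + k := by
  let j : Fin ((n - 3) / 2) := ⟨k - 1, by omega⟩
  refine ⟨Sum.inl 0, Sum.inr (Sum.inr j), by simp, by simp [Gkn, fromRel_adj], ?_⟩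
  rw [degN_inl hk (by omega), degN_inr_inr_of_le le_rfl]
  omega

end Gkn

/-- `n1 k` is an `sInf`, which is `0` for the empty set: the point is that the set is nonempty. -/
lemma n1_mem {k : ℕ} (hk : 2 ≤ k) : n1 k ∈ {N : ℕ | 0 < N ∧ ∀ m : ℕ, N ≤ m →
    0 ≤ ((m : ℝ) + 2 * k - 2) / 4 - 2 * ck k * Real.sqrt m - (k : ℝ) ^ 2 - 2 * k - 1} := by
  refine Nat.sInf_mem ?_
  have hc : 0 ≤ ck k := Real.sqrt_nonneg _
  have hK : (2 : ℝ) ≤ k := by exact_mod_cast hk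
  set C : ℝ := 8 * ck k + 4 * ((k : ℝ) ^ 2 + 2 * k + 1) + 1
  have hC : 1 ≤ C := by nlinarith
  refine ⟨⌈C ^ 2⌉₊, Nat.ceil_pos.mpr (by positivity), fun m hm => ?_⟩
  have hCm : C ≤ Real.sqrt m := Real.le_sqrt_of_sq_le ((Nat.le_ceil _).trans (by exact_mod_cast hm))
  have hm : Real.sqrt m * Real.sqrt m = m := Real.mul_self_sqrt (Nat.cast_nonneg m)
  nlinarith [mul_le_mul_of_nonneg_right hCm (Real.sqrt_nonneg (m : ℝ))]

lemma le_of_n1_le {k n : ℕ} (hk : 2 ≤ k) (hn : n1 k ≤ n) : 4 * (k + 1) ^ 2 + 2 ≤ n + 2 * k := by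
  have h := (n1_mem hk).2 n hn
  have : (4 * (k + 1) ^ 2 + 2 : ℝ) ≤ n + 2 * k := by
    have hc : 0 ≤ ck k := Real.sqrt_nonneg _
    linarith [mul_nonneg hc (Real.sqrt_nonneg n)]
  exact_mod_cast this

/-- The graph `G'_{k,n}` (for odd `n ≥ n₁(k)`) is a connected graph of order `n`,
satisfies `σ₂(G'_{k,n}) = (n + 2k - 3)/2`, and has no `k`-blocking set. -/
theorem stmt9 (k n : ℕ) (hk : 2 ≤ k) (hn : n1 k ≤ n) (hodd : Odd n) :
    (Gkn k n).Connected ∧ Fintype.card (GknV n) = n ∧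
    (∀ u v : GknV n, u ≠ v → ¬ (Gkn k n).Adj u v →
      (n + 2 * k - 3) / 2 ≤ degN (Gkn k n) u + degN (Gkn k n) v) ∧
    (∃ u v : GknV n, u ≠ v ∧ ¬ (Gkn k n).Adj u v ∧
      degN (Gkn k n) u + degN (Gkn k n) v = (n + 2 * k - 3) / 2) ∧
    ¬ ∃ U : Set (GknV n), KBlocking k (Gkn k n) U := by
  have hbig := le_of_n1_le hk hn
  have hkn : k + 2 ≤ (n - 3) / 2 := by
    have : 2 * k + 7 ≤ n := by nlinarith
    omega
  have hσ : (n + 2 * k - 3) / 2 = (n - 3) / 2 + k := by omega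
  have hconn := Gkn.connected hk (by omega : 0 < (n - 3) / 2)
  refine ⟨hconn, Gkn.card_vertices (by omega) hodd, ?_, ?_, ?_⟩
  · rw [hσ]
    exact fun u v => Gkn.le_degN_add_degN_of_not_adj (by omega) hkn
  · rw [hσ]
    exact Gkn.exists_not_adj_degN_add_degN_eq (by omega) hkn
  · rintro ⟨U, hU⟩
    exact hconn.not_kBlocking (Gkn.lt_degN (by omega) hkn) U hU
end

section
/- Let k ≥ 2 be an integer. If a connected graph G has a k-blocking set, then G has no [2,k]-ST. -/
/-!
A vertex of a `k`-blocking set `U` has finite degree at most `k` in `G`, hence in a `[2,k]`-ST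
`T ≤ G` it has at most one neighbour. A path of `T` between two vertices outside `U` cannot pass
through such a vertex, so `T - U`, and with it `G - U`, is connected: `U` is not a cutset.
-/

open SimpleGraph

namespace SimpleGraph

variable {V : Type*} {G : SimpleGraph V} {U : Set V}

theorem Walk.IsPath.support_notMem_of_subsingleton_neighborSet {u v : V} {p : G.Walk u v}
    (hp : p.IsPath) (hU : ∀ x ∈ U, (G.neighborSet x).Subsingleton) (hu : u ∉ U) (hv : v ∉ U) :
    ∀ x ∈ p.support, x ∉ U := by
  intro x hx hxU
  obtain ⟨i, rfl, hi⟩ := Walk.mem_support_iff_exists_getVert.mp hx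
  have hi0 : i ≠ 0 := by rintro rfl; exact hu (p.getVert_zero ▸ hxU)
  have hilt : i < p.length := by
    refine lt_of_le_of_ne hi ?_
    rintro rfl
    exact hv (p.getVert_length ▸ hxU)
  have hsub : (p.toSubgraph.neighborSet (p.getVert i)).Subsingleton :=
    (hU _ hxU).anti (p.toSubgraph.neighborSet_subset _)
  have : Finite (p.toSubgraph.neighborSet (p.getVert i)) := hsub.finite
  have htwo := hp.ncard_neighborSet_toSubgraph_internal_eq_two hi0 hilt
  have hle := Set.ncard_le_one_iff_subsingleton.mpr hsub
  omega

theorem Preconnected.induce_compl_of_subsingleton_neighborSet (hG : G.Preconnected)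
    (hU : ∀ x ∈ U, (G.neighborSet x).Subsingleton) : (G.induce Uᶜ).Preconnected := by
  classical
  rintro ⟨x, hx⟩ ⟨y, hy⟩
  obtain ⟨p⟩ := hG x y
  exact ⟨p.toPath.1.induce Uᶜ (p.toPath.2.support_notMem_of_subsingleton_neighborSet hU hx hy)⟩

theorem subsingleton_neighborSet_of_le {T : SimpleGraph V} {k : ℕ} {v : V} (hTG : T ≤ G)
    (hGpos : 0 < degN G v) (hGk : degN G v ≤ k) (hT : ¬ (2 ≤ degN T v ∧ degN T v ≤ k)) :
    (T.neighborSet v).Subsingleton := by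
  have hGfin := Set.finite_of_ncard_pos hGpos
  have : Finite (T.neighborSet v) := (hGfin.subset fun _ h => hTG h).to_subtype
  have hTG' : degN T v ≤ degN G v := Set.ncard_le_ncard (fun _ h => hTG h) hGfin
  rw [← Set.ncard_le_one_iff_subsingleton]
  unfold degN at *
  omega

end SimpleGraph

theorem stmt11_general {V : Type*} (k : ℕ) (G : SimpleGraph V)
    (hB : ∃ U : Set V, KBlocking k G U) :
    ¬ HasST2k k G := by
  rintro ⟨T, hTG, hT, hdeg⟩
  obtain ⟨U, hcut, hU⟩ := hB
  have hleaf : ∀ u ∈ U, (T.neighborSet u).Subsingleton := fun u hu =>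
    subsingleton_neighborSet_of_le hTG (Nat.zero_lt_of_lt (hU u hu).1) (hU u hu).2 (hdeg u)
  have hTU : (T.induce Uᶜ).Preconnected :=
    hT.connected.preconnected.induce_compl_of_subsingleton_neighborSet hleaf
  exact hcut (hTU.mono fun _ _ h => hTG h)

/-- If a connected graph `G` has a `k`-blocking set, then `G` has no `[2,k]`-ST. -/
theorem stmt11 {V : Type*} [Fintype V] (k : ℕ) (hk : 2 ≤ k) (G : SimpleGraph V)
    (hconn : G.Connected) (hB : ∃ U : Set V, KBlocking k G U) :
    ¬ HasST2k k G :=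
  stmt11_general k G hB
end

section
/- Let k ≥ 2 and n ≥ 2k+1 be integers and let G be a graph in the family 𝒢_{k,n} with defining partition L₁, L₂, L₃, L₄. Then L₂ is a k-blocking set of G. -/
open SimpleGraph

/- `L₂` separates `L₁` from `L₄`: vertices of `L₁` have no neighbours in `L₃ ∪ L₄`, so no walk
avoiding `L₂` leaves `L₁`. Each vertex of `L₂` has degree at least two, since it sees all
of `L₁` and a vertex of `L₃`. -/

namespace SimpleGraph

variable {V : Type*} {G : SimpleGraph V}

theorem not_preconnected_induce_compl_of_closed {U A : Set V} {a b : V}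
    (ha : a ∈ A) (haU : a ∉ U) (hb : b ∉ A) (hbU : b ∉ U)
    (hA : ∀ x ∈ A, ∀ y, G.Adj x y → y ∈ A ∪ U) :
    ¬ (G.induce Uᶜ).Preconnected := fun hpc => by
  obtain ⟨p⟩ := hpc ⟨a, haU⟩ ⟨b, hbU⟩
  obtain ⟨d, -, hd_fst, hd_snd⟩ := p.exists_boundary_dart (Subtype.val ⁻¹' A) ha hb
  rcases hA _ hd_fst _ d.adj with h | h
  · exact hd_snd h
  · exact d.snd.2 h

theorem two_le_degN [Finite V] {u x y : V} (hx : G.Adj u x) (hy : G.Adj u y) (hxy : x ≠ y) :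
    2 ≤ degN G u :=
  (Set.one_lt_ncard_iff).mpr ⟨x, y, hx, hy, hxy⟩

end SimpleGraph

namespace GFamilyWith

variable {V : Type*} {k : ℕ} {G : SimpleGraph V} {L1 L2 L3 L4 : Set V}

theorem mem_of_adj_of_mem_L1 (hG : GFamilyWith k G L1 L2 L3 L4) {x y : V}
    (hx : x ∈ L1) (hxy : G.Adj x y) : y ∈ L1 ∪ L2 := by
  obtain ⟨-, -, -, -, huniv, -, -, -, -, -, -, -, -, hL1, -⟩ := hG
  have hy : y ∈ L1 ∪ L2 ∪ L3 ∪ L4 := huniv ▸ Set.mem_univ y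
  rcases hy with (hy | hy3) | hy4
  · exact hy
  · exact absurd hxy (hL1 x hx y (Or.inl hy3))
  · exact absurd hxy (hL1 x hx y (Or.inr hy4))

theorem not_preconnected_induce_compl_L2 (hG : GFamilyWith k G L1 L2 L3 L4) :
    ¬ (G.induce L2ᶜ).Preconnected := by
  have hclosed : ∀ x ∈ L1, ∀ y, G.Adj x y → y ∈ L1 ∪ L2 :=
    fun x hx y hxy => hG.mem_of_adj_of_mem_L1 hx hxy
  obtain ⟨⟨a, ha⟩, -, -, ⟨b, hb⟩, -, d12, -, d14, -, d24, -⟩ := hG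
  exact not_preconnected_induce_compl_of_closed ha (d12.notMem_of_mem_left ha)
    (d14.notMem_of_mem_right hb) (d24.notMem_of_mem_right hb) hclosed

theorem two_le_degN_of_mem_L2 [Finite V] (hG : GFamilyWith k G L1 L2 L3 L4) {u : V}
    (hu : u ∈ L2) : 2 ≤ degN G u := by
  obtain ⟨⟨v, hv⟩, -, -, -, -, d12, d13, -, -, -, -, cl12, -, -, hL2, -⟩ := hG
  obtain ⟨⟨w, hw, huw⟩, -⟩ := hL2 u hu
  have huv : G.Adj u v :=
    cl12 (Or.inr hu) (Or.inl hv) fun h => d12.ne_of_mem hv hu h.symm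
  exact two_le_degN huv huw (d13.ne_of_mem hv hw)

theorem degN_le_of_mem_L2 (hG : GFamilyWith k G L1 L2 L3 L4) {u : V} (hu : u ∈ L2) :
    degN G u ≤ k := by
  obtain ⟨-, -, -, -, -, -, -, -, -, -, -, -, -, -, hL2, -⟩ := hG
  exact (hL2 u hu).2.2

end GFamilyWith

theorem stmt12_general {V : Type*} [Fintype V] (k : ℕ)
    (G : SimpleGraph V) (L1 L2 L3 L4 : Set V)
    (hG : GFamilyWith k G L1 L2 L3 L4) :
    KBlocking k G L2 :=
  ⟨hG.not_preconnected_induce_compl_L2,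
    fun _ hu => ⟨hG.two_le_degN_of_mem_L2 hu, hG.degN_le_of_mem_L2 hu⟩⟩

/-- For `G ∈ 𝒢_{k,n}` with defining partition `L₁, L₂, L₃, L₄`, the set `L₂`
is a `k`-blocking set of `G`. -/
theorem stmt12 {V : Type*} [Fintype V] (k n : ℕ) (hk : 2 ≤ k) (hn : 2 * k + 1 ≤ n)
    (hcard : Fintype.card V = n) (G : SimpleGraph V) (L1 L2 L3 L4 : Set V)
    (hG : GFamilyWith k G L1 L2 L3 L4) :
    KBlocking k G L2 :=
  stmt12_general k G L1 L2 L3 L4 hG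
end

section
/- Let G be a graph, let s₀ be a real number with σ₂(G) ≥ s₀, and let S = {u ∈ V(G) : d_G(u) < s₀/2}. Then for every u ∈ S and every component Q of G − S, we have V(Q) \ N_G(u) ≠ ∅. -/
open SimpleGraph

/-!
Pick any vertex `v` of `Q`. If `v ∉ N(u)` we are done. Otherwise `v ∉ S` gives
`d(v) ≥ s₀/2 > d(u)`, so `v` has a neighbour `w ≠ u` outside `N(u)`, since `N(v) ⊆ {u} ∪ N(u) ∖ {v}`
would force `d(v) ≤ d(u)`. As `u, w` are non-adjacent, `σ₂ ≥ s₀` gives `d(w) > s₀/2`, so `w ∉ S`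
and `w` lies in the component of `v`.
-/

namespace SimpleGraph

variable {V : Type*} (G : SimpleGraph V)

theorem exists_adj_ne_not_adj_of_degN_lt [Finite V] {u v : V} (huv : G.Adj u v)
    (hdeg : degN G u < degN G v) : ∃ w, G.Adj v w ∧ w ≠ u ∧ ¬ G.Adj u w := by
  by_contra! hcontra
  have hsub : G.neighborSet v ⊆ insert u (G.neighborSet u \ {v}) := by
    intro w hvw
    by_cases hwu : w = u
    · exact Or.inl hwu
    · exact Or.inr ⟨hcontra w hvw hwu, fun hwv => G.loopless.irrefl v (hwv ▸ hvw)⟩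
  have hle : degN G v ≤ degN G u :=
    calc (G.neighborSet v).ncard
        ≤ (insert u (G.neighborSet u \ {v})).ncard := Set.ncard_le_ncard hsub
      _ ≤ (G.neighborSet u \ {v}).ncard + 1 := Set.ncard_insert_le _ _
      _ = (G.neighborSet u).ncard := Set.ncard_sdiff_singleton_add_one huv
  omega

end SimpleGraph

/-- Claim 3.2: with `σ₂(G) ≥ s₀` and `S = {u : d_G(u) < s₀/2}`, for every `u ∈ S` and
every component `Q` of `G - S` we have `V(Q) \ N_G(u) ≠ ∅`. -/
theorem stmt16 {V : Type*} [Fintype V] (G : SimpleGraph V) (s0 : ℝ) (S : Set V)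
    (hS : S = {u : V | (degN G u : ℝ) < s0 / 2})
    (hsigma : ∀ u v : V, u ≠ v → ¬ G.Adj u v → s0 ≤ (degN G u : ℝ) + degN G v)
    (u : V) (hu : u ∈ S) (Q : (G.induce Sᶜ).ConnectedComponent) :
    ∃ v : ↥(Sᶜ), (G.induce Sᶜ).connectedComponentMk v = Q ∧ (v : V) ∉ G.neighborSet u := by
  subst hS
  have hu' : (degN G u : ℝ) < s0 / 2 := hu
  obtain ⟨v, rfl⟩ := Q.exists_rep
  by_cases huv : G.Adj u v
  swap
  · exact ⟨v, rfl, huv⟩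
  have hv : s0 / 2 ≤ (degN G v : ℝ) := not_lt.mp v.2
  obtain ⟨w, hvw, hwu, huw⟩ :=
    G.exists_adj_ne_not_adj_of_degN_lt huv (by exact_mod_cast hu'.trans_le hv)
  have hw : w ∈ {u : V | (degN G u : ℝ) < s0 / 2}ᶜ := fun hw : (degN G w : ℝ) < s0 / 2 =>
    (hsigma u w hwu.symm huw).not_gt (by linarith)
  refine ⟨⟨w, hw⟩, ?_, huw⟩
  exact ConnectedComponent.connectedComponentMk_eq_of_adj
    (show (G.induce _).Adj ⟨w, hw⟩ v from hvw.symm)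
end

section
/- Let G be a graph, let t be a nonnegative real number with π₂(G) ≥ t², and let S = {u ∈ V(G) : d_G(u) < t}. Then for every u ∈ S and every component Q of G − S, we have V(Q) \ N_G(u) ≠ ∅. -/
/-!
If `u ∈ S` were adjacent to every vertex of `Q`, then, since two vertices of degree below `t`
cannot be non-adjacent, `N(u) ⊇ (S \ {u}) ∪ V(Q)`, while `N(v) ⊆ S ∪ (V(Q) \ {v})` for any
`v ∈ V(Q)`. Counting gives `t ≤ d(v) ≤ d(u) < t`.
-/

open SimpleGraph

section

variable {V : Type*}

theorem Set.ncard_le_of_subset_union_diff_singleton [Finite V] {A B X Y : Set V} {a b : V}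
    (ha : a ∈ A) (hb : b ∈ B) (hAB : Disjoint A B)
    (hX : A \ {a} ∪ B ⊆ X) (hY : Y ⊆ A ∪ (B \ {b})) : Y.ncard ≤ X.ncard := by
  have hA := Set.ncard_sdiff_singleton_add_one ha A.toFinite
  have hB := Set.ncard_sdiff_singleton_add_one hb B.toFinite
  have hdisj : Disjoint (A \ {a}) B := hAB.mono_left Set.sdiff_subset
  calc Y.ncard ≤ (A ∪ (B \ {b})).ncard := Set.ncard_le_ncard hY
    _ ≤ A.ncard + (B \ {b}).ncard := Set.ncard_union_le _ _
    _ = (A \ {a}).ncard + B.ncard := by omega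
    _ = (A \ {a} ∪ B).ncard := (Set.ncard_union_eq hdisj).symm
    _ ≤ X.ncard := Set.ncard_le_ncard hX

namespace SimpleGraph

theorem neighborSet_subset_of_mem_supp_induce_compl (G : SimpleGraph V) {s : Set V}
    {C : (G.induce sᶜ).ConnectedComponent} {v : ↥sᶜ} (hv : v ∈ C.supp) :
    G.neighborSet v ⊆ s ∪ (Subtype.val '' C.supp \ {(v : V)}) := by
  intro w hw
  by_cases hws : w ∈ sᶜ
  · have hadj : (G.induce sᶜ).Adj v ⟨w, hws⟩ := hw
    refine Or.inr ⟨⟨⟨w, hws⟩, ?_, rfl⟩, fun h => G.loopless.irrefl w (h ▸ hw)⟩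
    rw [ConnectedComponent.mem_supp_iff] at hv ⊢
    exact hv ▸ (ConnectedComponent.sound hadj.reachable).symm
  · exact Or.inl (Set.not_notMem.mp hws)

theorem adj_of_degN_lt {G : SimpleGraph V} {t : ℝ}
    (hpi : ∀ u v : V, u ≠ v → ¬ G.Adj u v → t ^ 2 ≤ (degN G u : ℝ) * degN G v)
    {u w : V} (huw : u ≠ w) (hu : (degN G u : ℝ) < t) (hw : (degN G w : ℝ) < t) :
    G.Adj u w := by
  by_contra hadj
  have := hpi u w huw hadj
  have hu0 : (0 : ℝ) ≤ degN G u := Nat.cast_nonneg _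
  have hw0 : (0 : ℝ) ≤ degN G w := Nat.cast_nonneg _
  nlinarith [mul_lt_mul'' hu hw hu0 hw0]

end SimpleGraph

end

theorem stmt17_general {V : Type*} [Fintype V] (G : SimpleGraph V) (t : ℝ) (S : Set V)
    (hS : S = {u : V | (degN G u : ℝ) < t})
    (hpi : ∀ u v : V, u ≠ v → ¬ G.Adj u v → t ^ 2 ≤ (degN G u : ℝ) * degN G v)
    (u : V) (hu : u ∈ S) (Q : (G.induce Sᶜ).ConnectedComponent) :
    ∃ v : ↥(Sᶜ), (G.induce Sᶜ).connectedComponentMk v = Q ∧ (v : V) ∉ G.neighborSet u := by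
  have hS_iff : ∀ w, w ∈ S ↔ (degN G w : ℝ) < t := fun w => by rw [hS]; rfl
  by_contra! hQ
  obtain ⟨v, hv⟩ : ∃ v, v ∈ Q.supp := Q.exists_rep
  have hu_adj : S \ {u} ∪ Subtype.val '' Q.supp ⊆ G.neighborSet u := by
    rintro w (⟨hw, hwu⟩ | ⟨w, hw, rfl⟩)
    · exact adj_of_degN_lt hpi (Ne.symm hwu) ((hS_iff u).mp hu) ((hS_iff w).mp hw)
    · exact hQ w hw
  have hdeg : degN G v ≤ degN G u :=
    Set.ncard_le_of_subset_union_diff_singleton hu (Set.mem_image_of_mem Subtype.val hv)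
      (disjoint_compl_right.mono_right (Subtype.coe_image_subset _ _))
      hu_adj (G.neighborSet_subset_of_mem_supp_induce_compl hv)
  have hv_deg : t ≤ degN G v := not_lt.mp (mt (hS_iff v).mpr v.2)
  exact (hv_deg.trans (Nat.cast_le.mpr hdeg)).not_gt ((hS_iff u).mp hu)

/-- Claim 4.1: with `π₂(G) ≥ t²` and `S = {u : d_G(u) < t}`, for every `u ∈ S` and
every component `Q` of `G - S` we have `V(Q) \ N_G(u) ≠ ∅`. -/
theorem stmt17 {V : Type*} [Fintype V] (G : SimpleGraph V) (t : ℝ) (ht : 0 ≤ t) (S : Set V)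
    (hS : S = {u : V | (degN G u : ℝ) < t})
    (hpi : ∀ u v : V, u ≠ v → ¬ G.Adj u v → t ^ 2 ≤ (degN G u : ℝ) * degN G v)
    (u : V) (hu : u ∈ S) (Q : (G.induce Sᶜ).ConnectedComponent) :
    ∃ v : ↥(Sᶜ), (G.induce Sᶜ).connectedComponentMk v = Q ∧ (v : V) ∉ G.neighborSet u :=
  stmt17_general G t S hS hpi u hu Q
end

section
/- For every integer k ≥ 2, we have n₁(k) > k³. -/
/-!
The defining inequality of `n₁(k)` fails at `m = k³`: since `c_k² ≥ k³/2`, the term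
`2 c_k √(k³)` alone already exceeds `(k³ + 2k - 2)/4`. On the other hand it holds for all large
`m`, as `m/4` dominates `2 c_k √m`, so the infimum defining `n₁(k)` is attained and exceeds `k³`.
-/

open Filter

theorem Nat.lt_sInf_of_eventually {P : ℕ → Prop} {a : ℕ} (hP : ∀ᶠ m in atTop, P m)
    (ha : ¬ P a) : a < sInf {N : ℕ | 0 < N ∧ ∀ m, N ≤ m → P m} := by
  obtain ⟨N, hN⟩ := eventually_atTop.1 hP
  have hmem := Nat.sInf_mem (s := {N : ℕ | 0 < N ∧ ∀ m, N ≤ m → P m})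
    ⟨N + 1, N.succ_pos, fun m hm => hN m (by omega)⟩
  by_contra! h
  exact ha (hmem.2 a h)

theorem sq_div_four_sub_mul_sub_nonneg {b c t : ℝ}
    (ht : 2 * b + 2 * √(b ^ 2 + c) ≤ t) : 0 ≤ t ^ 2 / 4 - b * t - c := by
  have h : b ^ 2 + c ≤ (t / 2 - b) ^ 2 := (Real.sqrt_le_iff.1 (by linarith)).2
  nlinarith

noncomputable def n1Gap (k m : ℕ) : ℝ :=
  ((m : ℝ) + 2 * k - 2) / 4 - 2 * ck k * Real.sqrt m - (k : ℝ) ^ 2 - 2 * k - 1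

theorem n1_eq_sInf (k : ℕ) : n1 k = sInf {N : ℕ | 0 < N ∧ ∀ m, N ≤ m → 0 ≤ n1Gap k m} := rfl

theorem n1Gap_eq (k m : ℕ) :
    n1Gap k m = √m ^ 2 / 4 - 2 * ck k * √m - ((k : ℝ) ^ 2 + 3 * k / 2 + 3 / 2) := by
  rw [n1Gap, Real.sq_sqrt m.cast_nonneg]
  ring

theorem eventually_n1Gap_nonneg (k : ℕ) : ∀ᶠ m : ℕ in atTop, 0 ≤ n1Gap k m := by
  set b := 2 * ck k
  set c : ℝ := (k : ℝ) ^ 2 + 3 * k / 2 + 3 / 2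
  have hb : 0 ≤ b := mul_nonneg zero_le_two (Real.sqrt_nonneg _)
  set T := 2 * b + 2 * √(b ^ 2 + c)
  have hT : 0 ≤ T := by positivity
  refine eventually_atTop.2 ⟨⌈T ^ 2⌉₊, fun m hm => ?_⟩
  have hTm : T ≤ √m := (Real.le_sqrt hT m.cast_nonneg).2 (Nat.ceil_le.1 hm)
  rw [n1Gap_eq]
  exact sq_div_four_sub_mul_sub_nonneg hTm

theorem cube_le_two_mul_ck_sq {k : ℕ} (hk : 2 ≤ k) : (k : ℝ) ^ 3 ≤ 2 * ck k ^ 2 := by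
  have hk2 : (2 : ℝ) ≤ k := by exact_mod_cast hk
  have hroot := Real.sqrt_nonneg (2 * (k : ℝ))
  have hfactor : (k : ℝ) ≤ k + 2 * √(2 * k) + 2 := by linarith
  have hkk : 0 ≤ (k : ℝ) * (k - 1) := by nlinarith
  rw [ck, Real.sq_sqrt (mul_nonneg hkk (by linarith))]
  nlinarith [mul_le_mul_of_nonneg_left hfactor hkk]

theorem cube_le_two_mul_ck_mul_sqrt_cube {k : ℕ} (hk : 2 ≤ k) :
    (k : ℝ) ^ 3 ≤ 2 * ck k * √((k : ℝ) ^ 3) := by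
  have hck : 0 ≤ ck k := Real.sqrt_nonneg _
  have hroot : √((k : ℝ) ^ 3) ≤ 2 * ck k :=
    Real.sqrt_le_iff.2 ⟨by positivity, by nlinarith [cube_le_two_mul_ck_sq hk]⟩
  calc (k : ℝ) ^ 3 = √((k : ℝ) ^ 3) * √((k : ℝ) ^ 3) := (Real.mul_self_sqrt (by positivity)).symm
    _ ≤ 2 * ck k * √((k : ℝ) ^ 3) := mul_le_mul_of_nonneg_right hroot (Real.sqrt_nonneg _)

theorem n1Gap_cube_neg {k : ℕ} (hk : 2 ≤ k) : n1Gap k (k ^ 3) < 0 := by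
  have hk2 : (2 : ℝ) ≤ k := by exact_mod_cast hk
  have hbig := cube_le_two_mul_ck_mul_sqrt_cube hk
  rw [n1Gap, Nat.cast_pow]
  nlinarith

/-- For every integer `k ≥ 2`, `n₁(k) > k³`. -/
theorem stmt19 (k : ℕ) (hk : 2 ≤ k) : k ^ 3 < n1 k := by
  rw [n1_eq_sInf]
  exact Nat.lt_sInf_of_eventually (eventually_n1Gap_nonneg k) (n1Gap_cube_neg hk).not_ge
end
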